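/- arXiv:1403.8139 — 2 statements merged into one kernel-verified Lean document; each statement's English description precedes it below -/
import Mathlib

section
/- Let λ be a weakly decreasing tuple of nonnegative integers of length n > 2, λ' = (λ_2,…,λ_n), and λ'' = (λ_3,…,λ_n). Then, in F, −x_1^{λ_2} · ∏_{a=2}^n (x_1 − t x_a)/(x_1 − x_a) · ζ(P_{λ'}(x;t)) = x_1^{λ_2} · Σ_{i=2}^n ∏_{1≤a≤n, a≠i}(x_i − t x_a)/(x_i − x_a) · ∏_{1≤a≤n, a≠1,i}(x_1 − t x_a)/(x_1 − x_a) · ((x_1 − t x_i)·x_i^{λ_2}/(x_i − t x_1)) · ζ_{1,i}(P_{λ''}(x;t)). -/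
open MvPolynomial Finset

noncomputable section

abbrev Rr : Type := MvPolynomial (Fin 2 ⊕ ℕ) ℚ

abbrev F : Type := FractionRing Rr

/-- The variable `q`. -/
def q : F := algebraMap Rr F (X (Sum.inl 0))

/-- The variable `t`. -/
def t : F := algebraMap Rr F (X (Sum.inl 1))

/-- `x k` is the variable `x_{k+1}` of the paper (0-indexed). -/
def x (k : ℕ) : F := algebraMap Rr F (X (Sum.inr k))

/-- Substitution endomorphism of `F` induced by an injective map of variables. -/
def subF (g : Fin 2 ⊕ ℕ → Fin 2 ⊕ ℕ) (hg : Function.Injective g) : F →+* F :=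
  IsFractionRing.lift (g := (algebraMap Rr F).comp (rename g).toRingHom)
    (by
      rw [RingHom.coe_comp]
      exact (IsFractionRing.injective Rr F).comp (rename_injective g hg))

def permNat (n : ℕ) (σ : Equiv.Perm (Fin n)) : ℕ → ℕ :=
  fun k => if h : k < n then (σ ⟨k, h⟩ : ℕ) else k

lemma permNat_inj (n : ℕ) (σ : Equiv.Perm (Fin n)) : Function.Injective (permNat n σ) := by
  intro a b hab
  unfold permNat at hab
  split_ifs at hab with h1 h2 h2
  · have := σ.injective (Fin.val_injective hab)
    exact congrArg Fin.val this
  · have := (σ ⟨a, h1⟩).isLt; omega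
  · have := (σ ⟨b, h2⟩).isLt; omega
  · exact hab

/-- The action of a permutation `σ ∈ S_n` on `F`, permuting `x_1, …, x_n`. -/
def pact (n : ℕ) (σ : Equiv.Perm (Fin n)) : F →+* F :=
  subF (Sum.map id (permNat n σ)) (Function.injective_id.sumMap (permNat_inj n σ))

def shiftNat (i : ℕ) : ℕ → ℕ := fun k => if k < i then k else k + 1

lemma shiftNat_inj (i : ℕ) : Function.Injective (shiftNat i) := by
  intro a b; unfold shiftNat; split_ifs <;> omega

/-- `zeta i` is the endomorphism `ζ_{i+1}` of the paper: it fixes `q`, `t` and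
`x k` for `k < i`, and sends `x k` to `x (k+1)` for `k ≥ i` (0-indexed). -/
def zeta (i : ℕ) : F →+* F :=
  subF (Sum.map id (shiftNat i)) (Function.injective_id.sumMap (shiftNat_inj i))

/-- `zetaP i j` is `ζ_{i+1,j+1}` of the paper. -/
def zetaP (i j : ℕ) : F →+* F := (zeta (max i j)).comp (zeta (min i j))

/-- The Hall–Littlewood polynomial `P_λ(x; t)` in `n` variables. -/
def HL (n : ℕ) (lam : Fin n → ℕ) : F :=
  ∑ σ : Equiv.Perm (Fin n), pact n σ
    ((∏ i : Fin n, x i.val ^ lam i) *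
      ∏ i : Fin n, ∏ j ∈ Finset.Ioi i, (x i.val - t * x j.val) / (x i.val - x j.val))

/-- `ρ_n`, 0-indexed: `rho n i = n - 1 - i`. -/
def rho (n : ℕ) : Fin n → ℕ := fun i => n - 1 - i.val

/-- The deformed Weyl denominator `Δ_n(c) = ∏_{i<j} (x_i - c x_j)`. -/
def DeltaQ (n : ℕ) (c : F) : F := ∏ i : Fin n, ∏ j ∈ Finset.Ioi i, (x i.val - c * x j.val)

/-- The Schur polynomial `s_λ(x) = Σ_σ σ(x^{λ+ρ}/Δ_n)`. -/
def Schur (n : ℕ) (lam : Fin n → ℕ) : F :=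
  ∑ σ : Equiv.Perm (Fin n), pact n σ
    ((∏ i : Fin n, x i.val ^ (lam i + rho n i)) / DeltaQ n 1)

/-- `GT2 n α` is the set of tuples `μ` of length `n` with `α_{i+1} ≤ μ_i ≤ α_i`. -/
def GT2 (n : ℕ) (α : Fin (n+1) → ℕ) : Finset (Fin n → ℕ) :=
  Fintype.piFinset (fun i => Finset.Icc (α i.succ) (α i.castSucc))

def GLw (y a : ℕ) : F := if y = a then -q else if y + 1 = a then t else 0

def GRw (y b : ℕ) : F := if y = b then 1 else if y = b + 1 then -q * t else 0

/-- `w(μ_j)` where `a1 = α_j`, `a2 = α_{j+1}`, `m = μ_j`. -/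
def wgt (a1 a2 m : ℕ) : F :=
  (if m = a1 ∨ m = a2 then 0 else (1 - q) * (1 - t)) + GLw m a1 + GRw m a2

/-- The tridiagonal determinant `M(α; μ)`. -/
def Mdet (n : ℕ) (α : Fin (n+1) → ℕ) (μ : Fin n → ℕ) : F :=
  Matrix.det (Matrix.of fun i j : Fin n =>
    if i = j then wgt (α i.castSucc) (α i.succ) (μ i)
    else if (i : ℕ) + 1 = (j : ℕ) then 1
    else if (j : ℕ) + 1 = (i : ℕ) then GRw (μ j) (α i.castSucc) * GLw (μ i) (α i.castSucc)
    else 0)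

def tot {n : ℕ} (f : Fin n → ℕ) : ℕ := ∑ i, f i


/-!
Expanding `ζ(P_{λ'})`, a symmetrisation over the variables `x_2, …, x_n`, according to which
variable `x_i` receives the first exponent `λ_2` writes it as
`∑_{i ≥ 2} x_i^{λ_2} ∏_{a ≠ 1, i} (x_i - t x_a)/(x_i - x_a) · ζ_{1,i}(P_{λ''})`, because `ζ_{1,i}`
sends `x_1, …, x_{n-2}` to the variables `x_a` with `a ≠ 1, i`, in increasing order. The identity
then holds term by term: multiplying by `-∏_{a ≥ 2} (x_1 - t x_a)/(x_1 - x_a)` and using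
`-(x_1 - t x_i)/(x_1 - x_i) = (x_i - t x_1)/(x_i - x_1) · (x_1 - t x_i)/(x_i - t x_1)`
gives the `i`-th summand on the right.
-/

lemma range_succ_erase_zero (n : ℕ) :
    (range (n + 1)).erase 0 = (range n).map (addRightEmbedding 1) := by
  rw [range_add_one', erase_insert (by simp)]
  rfl

lemma Icc_one_eq_map_range (n : ℕ) : Icc 1 n = (range n).map (addRightEmbedding 1) := by
  ext a
  simp only [mem_Icc, mem_map, mem_range, addRightEmbedding_apply]
  exact ⟨fun h => ⟨a - 1, by omega, by omega⟩, by omega⟩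

lemma prod_range_erase_eq_prod_succAbove {M : Type*} [CommMonoid M] (n : ℕ) (p : Fin (n + 1))
    (g : ℕ → M) : ∏ a ∈ (range (n + 1)).erase p, g a = ∏ j : Fin n, g (p.succAbove j) := by
  change ∏ a ∈ (range (n + 1)).erase (Fin.valEmbedding p), g a = _
  rw [← Nat.Iio_eq_range, ← Fin.map_valEmbedding_univ, ← map_erase,
    prod_map, Fin.univ_succAbove n p, erase_cons, prod_map]
  rfl

lemma prod_range_erase_succ {M : Type*} [CommMonoid M] (n : ℕ) (p : Fin (n + 1)) (g : ℕ → M) :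
    ∏ a ∈ (range (n + 2)).erase (p + 1), g a = g 0 * ∏ j : Fin n, g (p.succAbove j + 1) := by
  rw [← Fin.val_succ, prod_range_erase_eq_prod_succAbove, Fin.prod_univ_succ]
  simp [Fin.succ_succAbove_succ]

lemma prod_range_erase_zero_erase_succ {M : Type*} [CommMonoid M] (n : ℕ) (p : Fin (n + 1))
    (g : ℕ → M) :
    ∏ a ∈ ((range (n + 2)).erase 0).erase (p + 1), g a = ∏ j : Fin n, g (p.succAbove j + 1) := by
  rw [range_succ_erase_zero, show (p : ℕ) + 1 = addRightEmbedding 1 (p : ℕ) from rfl,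
    ← map_erase, prod_map, prod_range_erase_eq_prod_succAbove]
  rfl

lemma neg_pow_mul_ratio_eq {K : Type*} [Field K] {a b s : K} (L : ℕ) (hab : a ≠ b)
    (hb : b - s * a ≠ 0) (B C Z : K) :
    -(a ^ L) * ((a - s * b) / (a - b) * B) * (b ^ L * C * Z) =
      a ^ L * ((b - s * a) / (b - a) * C * B * ((a - s * b) * b ^ L / (b - s * a)) * Z) := by
  have hab' : a - b ≠ 0 := sub_ne_zero.2 hab
  have hba : b - a ≠ 0 := sub_ne_zero.2 hab.symm
  rw [mul_comm s a] at hb ⊢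
  field_simp
  ring

lemma subF_x (f : ℕ → ℕ) (hf : Function.Injective (Sum.map id f : Fin 2 ⊕ ℕ → Fin 2 ⊕ ℕ))
    (k : ℕ) : subF (Sum.map id f) hf (x k) = x (f k) := by
  rw [x, subF, IsFractionRing.lift_algebraMap]
  simp [x]

lemma subF_t (f : ℕ → ℕ) (hf : Function.Injective (Sum.map id f : Fin 2 ⊕ ℕ → Fin 2 ⊕ ℕ)) :
    subF (Sum.map id f) hf t = t := by
  rw [t, subF, IsFractionRing.lift_algebraMap]
  simp

lemma x_injective : Function.Injective x :=
  fun _ _ h => Sum.inr_injective (X_injective (IsFractionRing.injective Rr F h))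

lemma x_sub_t_mul_x_ne_zero (i j : ℕ) : x i - t * x j ≠ 0 := by
  rw [x, x, t, ← map_mul, ← map_sub, map_ne_zero_iff _ (IsFractionRing.injective Rr F)]
  intro h
  have := congrArg (eval fun v => if v = Sum.inr i then (1 : ℚ) else 0) h
  simp at this

/-- `HLAt k f μ` is `P_μ(x_{f 0}, …, x_{f (k-1)}; t)`. -/
def HLAt (k : ℕ) (f μ : Fin k → ℕ) : F :=
  ∑ σ : Equiv.Perm (Fin k), (∏ i, x (f (σ i)) ^ μ i) *
    ∏ i, ∏ j ∈ Ioi i, (x (f (σ i)) - t * x (f (σ j))) / (x (f (σ i)) - x (f (σ j)))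

lemma HL_eq_HLAt (n : ℕ) (μ : Fin n → ℕ) : HL n μ = HLAt n Fin.val μ := by
  refine sum_congr rfl fun σ _ => ?_
  have hpact : ∀ i : Fin n, pact n σ (x i) = x (σ i) := fun i => by
    rw [pact, subF_x, permNat, dif_pos i.isLt]
  have ht : pact n σ t = t := subF_t _ _
  simp only [map_mul, map_prod, map_pow, map_div₀, map_sub, hpact, ht]

lemma map_HLAt (Φ : F →+* F) (g : ℕ → ℕ) (ht : Φ t = t) (hx : ∀ k, Φ (x k) = x (g k))
    (k : ℕ) (f μ : Fin k → ℕ) : Φ (HLAt k f μ) = HLAt k (fun i => g (f i)) μ := by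
  simp only [HLAt, map_sum, map_mul, map_prod, map_pow, map_div₀, map_sub, hx, ht]

lemma HLAt_comp_perm (k : ℕ) (f μ : Fin k → ℕ) (c : Equiv.Perm (Fin k)) :
    HLAt k (fun j => f (c j)) μ = HLAt k f μ :=
  Fintype.sum_equiv (Equiv.mulLeft c) _ _ fun _ => rfl

lemma exists_perm_swap_zero_succ {k : ℕ} (p : Fin (k + 1)) :
    ∃ c : Equiv.Perm (Fin k), ∀ j, Equiv.swap 0 p j.succ = p.succAbove (c j) := by
  cases p using Fin.cases with
  | zero => exact ⟨1, fun j => by simp⟩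
  | succ i => exact ⟨i.cycleRange, fun j => (Fin.succAbove_cycleRange i j).symm⟩

lemma HLAt_succ (k : ℕ) (f μ : Fin (k + 1) → ℕ) :
    HLAt (k + 1) f μ = ∑ p, x (f p) ^ μ 0 *
      (∏ j, (x (f p) - t * x (f (p.succAbove j))) / (x (f p) - x (f (p.succAbove j)))) *
      HLAt k (fun j => f (p.succAbove j)) (fun j => μ j.succ) := by
  rw [HLAt, ← Equiv.sum_comp Equiv.Perm.decomposeFin.symm, Fintype.sum_prod_type]
  refine sum_congr rfl fun p _ => ?_
  obtain ⟨c, hc⟩ := exists_perm_swap_zero_succ p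
  rw [← HLAt_comp_perm _ _ _ c, HLAt, mul_sum]
  refine sum_congr rfl fun e _ => ?_
  simp only [Fin.prod_univ_succ, Fin.prod_Ioi_zero, Fin.prod_Ioi_succ,
    Equiv.Perm.decomposeFin_symm_apply_zero, Equiv.Perm.decomposeFin_symm_apply_succ, hc]
  have hprod : ∏ j, (x (f p) - t * x (f (p.succAbove (c (e j))))) /
      (x (f p) - x (f (p.succAbove (c (e j))))) =
      ∏ j, (x (f p) - t * x (f (p.succAbove j))) / (x (f p) - x (f (p.succAbove j))) :=
    Equiv.prod_comp (e.trans c) fun j =>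
      (x (f p) - t * x (f (p.succAbove j))) / (x (f p) - x (f (p.succAbove j)))
  rw [hprod]
  ring

lemma zeta_zero_HL (n : ℕ) (μ : Fin n → ℕ) : zeta 0 (HL n μ) = HLAt n (fun j => j + 1) μ := by
  rw [HL_eq_HLAt, zeta, map_HLAt _ _ (subF_t _ _) (subF_x _ _)]
  rfl

lemma zetaP_zero_succ_HL {k : ℕ} (p : Fin (k + 1)) (μ : Fin k → ℕ) :
    zetaP 0 (p + 1) (HL k μ) = HLAt k (fun j => (p.succAbove j : ℕ) + 1) μ := by
  have hshift : ∀ j : Fin k, shiftNat (p + 1) (shiftNat 0 j) = (p.succAbove j : ℕ) + 1 := by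
    intro j
    rw [Fin.succAbove]
    split_ifs with h <;> simp only [shiftNat, Fin.lt_def, Fin.val_castSucc, Fin.val_succ] at h ⊢ <;>
      split_ifs <;> omega
  simp only [zetaP, zeta, Nat.zero_max, Nat.zero_min, RingHom.comp_apply, HL_eq_HLAt]
  rw [map_HLAt _ _ (subF_t _ _) (subF_x _ _), map_HLAt _ _ (subF_t _ _) (subF_x _ _)]
  simp only [hshift]

theorem weird2_general (m : ℕ) (lam : Fin (m + 3) → ℕ) :
    -(x 0 ^ lam 1) * (∏ a ∈ Finset.Icc 1 (m + 2), (x 0 - t * x a) / (x 0 - x a)) *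
        zeta 0 (HL (m + 2) (fun j => lam j.succ)) =
      x 0 ^ lam 1 *
        ∑ i ∈ Finset.Icc 1 (m + 2),
          (∏ a ∈ (Finset.range (m + 3)).erase i, (x i - t * x a) / (x i - x a)) *
          (∏ a ∈ ((Finset.range (m + 3)).erase 0).erase i, (x 0 - t * x a) / (x 0 - x a)) *
          ((x 0 - t * x i) * x i ^ lam 1 / (x i - t * x 0)) *
          zetaP 0 i (HL (m + 1) (fun l => lam l.succ.succ)) := by
  rw [zeta_zero_HL, HLAt_succ, Icc_one_eq_map_range, sum_map, prod_map,
    ← Fin.sum_univ_eq_sum_range, ← Fin.prod_univ_eq_prod_range, mul_sum, mul_sum]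
  refine sum_congr rfl fun p _ => ?_
  simp only [addRightEmbedding_apply, Fin.succ_zero_eq_one, zetaP_zero_succ_HL,
    prod_range_erase_succ, prod_range_erase_zero_erase_succ]
  rw [Fin.prod_univ_succAbove _ p]
  exact neg_pow_mul_ratio_eq (lam 1) (x_injective.ne (by omega)) (x_sub_t_mul_x_ne_zero _ _) _ _ _

/-- **Equation (Weird2).** For a weakly decreasing `λ` of length `n > 2`:
`-x_1^{λ_2} ∏_{a=2}^n (x_1-t x_a)/(x_1-x_a) ζ(P_{λ'})
 = x_1^{λ_2} Σ_{i=2}^n ∏_{a≠i}(x_i-t x_a)/(x_i-x_a) ∏_{a≠1,i}(x_1-t x_a)/(x_1-x_a)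
   ((x_1-t x_i) x_i^{λ_2}/(x_i-t x_1)) ζ_{1,i}(P_{λ''})`. -/
theorem weird2 (m : ℕ) (lam : Fin (m + 3) → ℕ)
    (hlam : ∀ i j : Fin (m + 3), i ≤ j → lam j ≤ lam i) :
    -(x 0 ^ lam 1) * (∏ a ∈ Finset.Icc 1 (m + 2), (x 0 - t * x a) / (x 0 - x a)) *
        zeta 0 (HL (m + 2) (fun j => lam j.succ)) =
      x 0 ^ lam 1 *
        ∑ i ∈ Finset.Icc 1 (m + 2),
          (∏ a ∈ (Finset.range (m + 3)).erase i, (x i - t * x a) / (x i - x a)) *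
          (∏ a ∈ ((Finset.range (m + 3)).erase 0).erase i, (x 0 - t * x a) / (x 0 - x a)) *
          ((x 0 - t * x i) * x i ^ lam 1 / (x i - t * x 0)) *
          zetaP 0 i (HL (m + 1) (fun l => lam l.succ.succ)) :=
  weird2_general m lam

end
end

section
/- Let λ be a weakly decreasing tuple of nonnegative integers of length n > 2, α = λ + ρ_n, α'' = (α_3,…,α_n), and for nonnegative integers u, v define F(u,v) = Σ_{μ ∈ GT_2(α'')} M(α'';μ) · x_1^{|α''|−|μ|} · ζ(P_{(u,v)⌢(μ−ρ_{n−3})}(x;t)), where (u,v)⌢ν denotes the concatenation of (u,v) with the tuple ν. Then F(λ_2, λ_2 + 1) = t · F(λ_2 + 1, λ_2) in F. -/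
open MvPolynomial Finset

noncomputable section

/-- `F_{λ''}(u,v) = Σ_{μ ∈ GT₂(α'')} M(α'';μ) x_1^{|α''|-|μ|} ζ(P_{(u,v)⌢(μ-ρ_{n-3})})`. -/
def FF (m : ℕ) (lam : Fin (m + 3) → ℕ) (u v : ℕ) : F :=
  ∑ μ ∈ GT2 m (fun i => lam i.succ.succ + rho (m + 3) i.succ.succ),
    Mdet m (fun i => lam i.succ.succ + rho (m + 3) i.succ.succ) μ *
      x 0 ^ (tot (fun i : Fin (m + 1) => lam i.succ.succ + rho (m + 3) i.succ.succ) - tot μ) *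
      zeta 0 (HL (m + 2) (Fin.cons u (Fin.cons v (fun i => μ i - rho m i))))

/-!
Every summand of `F(u, v)` is `ζ` applied to a Hall–Littlewood polynomial `P_{(u,v)⌢ν}`, so it
suffices that `P_{(a,a+1)⌢ν} = t P_{(a+1,a)⌢ν}`. In the symmetrization over `S_n`, `σ` and
`σ ∘ (1 2)` may be paired, and the rest of the summand is symmetric in `x₁, x₂`; what remains is
the two-variable identity
`x₁^a x₂^(a+1) (x₁ - t x₂)/(x₁ - x₂) + x₂^a x₁^(a+1) (x₂ - t x₁)/(x₂ - x₁) = t (x₁ x₂)^a (x₁ + x₂)`,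
whose right side is `t` times the same expression for the exponents `(a+1, a)`.
-/

lemma subF_algebraMap (g : Fin 2 ⊕ ℕ → Fin 2 ⊕ ℕ) (hg : Function.Injective g) (r : Rr) :
    subF g hg (algebraMap Rr F r) = algebraMap Rr F (rename g r) :=
  IsFractionRing.lift_algebraMap _ _

lemma subF_t_s16 (g : Fin 2 ⊕ ℕ → Fin 2 ⊕ ℕ) (hg : Function.Injective g)
    (h : g (Sum.inl 1) = Sum.inl 1) : subF g hg t = t := by
  rw [t, subF_algebraMap, rename_X, h]

lemma zeta_t (i : ℕ) : zeta i t = t := subF_t_s16 _ _ rfl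

section Symmetrization

variable {n : ℕ}

lemma pact_t (σ : Equiv.Perm (Fin n)) : pact n σ t = t := subF_t_s16 _ _ rfl

lemma pact_x (σ : Equiv.Perm (Fin n)) (k : ℕ) : pact n σ (x k) = x (permNat n σ k) := by
  rw [pact, x, subF_algebraMap, rename_X]
  rfl

lemma permNat_mul (σ τ : Equiv.Perm (Fin n)) (k : ℕ) :
    permNat n (σ * τ) k = permNat n σ (permNat n τ k) := by
  unfold permNat
  by_cases hk : k < n <;> simp [hk]

lemma pact_mul (σ τ : Equiv.Perm (Fin n)) (z : F) :
    pact n (σ * τ) z = pact n σ (pact n τ z) := by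
  have hcomp : (pact n (σ * τ)).comp (algebraMap Rr F)
      = ((pact n σ).comp (pact n τ)).comp (algebraMap Rr F) := by
    ext r
    · simp [pact]
    · rcases r with _ | k <;> simp [pact, subF_algebraMap, permNat_mul]
  exact RingHom.congr_fun (IsLocalization.ringHom_ext (nonZeroDivisors Rr) hcomp) z

lemma sum_pact_pact (s : Equiv.Perm (Fin n)) (z : F) :
    ∑ σ : Equiv.Perm (Fin n), pact n σ (pact n s z) = ∑ σ : Equiv.Perm (Fin n), pact n σ z := by
  simp_rw [← pact_mul]
  exact Equiv.sum_comp (Equiv.mulRight s) (fun σ => pact n σ z)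

lemma sum_pact_eq_mul_of_add_pact (s : Equiv.Perm (Fin n)) {c f g : F}
    (hc : ∀ σ, pact n σ c = c) (h : f + pact n s f = c * (g + pact n s g)) :
    ∑ σ : Equiv.Perm (Fin n), pact n σ f = c * ∑ σ : Equiv.Perm (Fin n), pact n σ g := by
  refine mul_left_cancel₀ (two_ne_zero (α := F)) ?_
  calc 2 * ∑ σ : Equiv.Perm (Fin n), pact n σ f
      = ∑ σ : Equiv.Perm (Fin n), pact n σ (f + pact n s f) := by
        simp only [map_add, sum_add_distrib, sum_pact_pact]; ring
    _ = ∑ σ : Equiv.Perm (Fin n), c * (pact n σ g + pact n σ (pact n s g)) := by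
        simp only [h, map_mul, map_add, hc]
    _ = 2 * (c * ∑ σ : Equiv.Perm (Fin n), pact n σ g) := by
        rw [← mul_sum, sum_add_distrib, sum_pact_pact]; ring

end Symmetrization

lemma prod_prod_Ioi_succ {M : Type*} [CommMonoid M] (k : ℕ) (g : ℕ → ℕ → M) :
    ∏ i : Fin (k + 1), ∏ j ∈ Ioi i, g i j
      = (∏ j : Fin k, g 0 (j + 1)) * ∏ i : Fin k, ∏ j ∈ Ioi i, g (i + 1) (j + 1) := by
  simp [Fin.prod_univ_succ, Fin.prod_Ioi_succ]

def hlFactor (a b : ℕ) : F := (x a - t * x b) / (x a - x b)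

lemma HL_eq_sum_pact (n : ℕ) (lam : Fin n → ℕ) :
    HL n lam = ∑ σ : Equiv.Perm (Fin n),
      pact n σ ((∏ i : Fin n, x i ^ lam i) * ∏ i : Fin n, ∏ j ∈ Ioi i, hlFactor i j) :=
  rfl

def hlRest (m : ℕ) (ν : Fin m → ℕ) : F :=
  (∏ i : Fin m, x (i + 2) ^ ν i) *
    ((∏ j : Fin m, hlFactor 0 (j + 2)) * ∏ j : Fin m, hlFactor 1 (j + 2)) *
    ∏ i : Fin m, ∏ j ∈ Ioi i, hlFactor (i + 2) (j + 2)

lemma HL_cons_cons (m a b : ℕ) (ν : Fin m → ℕ) :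
    HL (m + 2) (Fin.cons a (Fin.cons b ν)) = ∑ σ : Equiv.Perm (Fin (m + 2)),
      pact (m + 2) σ (x 0 ^ a * x 1 ^ b * hlFactor 0 1 * hlRest m ν) := by
  rw [HL_eq_sum_pact]
  congr! 2
  rw [prod_prod_Ioi_succ _ hlFactor, prod_prod_Ioi_succ _ fun i j => hlFactor (i + 1) (j + 1),
    hlRest]
  simp only [Fin.prod_univ_succ, Fin.coe_ofNat_eq_mod, Nat.zero_mod, Fin.cons_zero, Fin.val_succ,
    Fin.cons_succ, zero_add]
  ring

lemma add_swap_eq_mul {K : Type*} [Field K] (a : ℕ) (T : K) {X Y : K} (hXY : X ≠ Y) :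
    X ^ a * Y ^ (a + 1) * ((X - T * Y) / (X - Y)) + Y ^ a * X ^ (a + 1) * ((Y - T * X) / (Y - X))
      = T * (X ^ (a + 1) * Y ^ a * ((X - T * Y) / (X - Y))
        + Y ^ (a + 1) * X ^ a * ((Y - T * X) / (Y - X))) := by
  have hXY' : X - Y ≠ 0 := sub_ne_zero.mpr hXY
  have hYX' : Y - X ≠ 0 := sub_ne_zero.mpr hXY.symm
  field_simp
  ring

section Swap

variable {m : ℕ}

local notation "s₀₁" => (Equiv.swap 0 1 : Equiv.Perm (Fin (m + 2)))

lemma pact_swap_x_zero : pact (m + 2) s₀₁ (x 0) = x 1 := by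
  simp [pact_x, permNat]

lemma pact_swap_x_one : pact (m + 2) s₀₁ (x 1) = x 0 := by
  simp [pact_x, permNat]

lemma pact_swap_x_add_two (k : ℕ) : pact (m + 2) s₀₁ (x (k + 2)) = x (k + 2) := by
  rw [pact_x, permNat]
  split_ifs with hk
  · rw [Equiv.swap_apply_of_ne_of_ne] <;> simp [Fin.ext_iff]
  · rfl

lemma pact_swap_hlFactor_zero_one : pact (m + 2) s₀₁ (hlFactor 0 1) = hlFactor 1 0 := by
  simp [hlFactor, pact_swap_x_zero, pact_swap_x_one, pact_t]

lemma pact_swap_hlRest (ν : Fin m → ℕ) : pact (m + 2) s₀₁ (hlRest m ν) = hlRest m ν := by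
  simp only [hlRest, hlFactor, map_mul, map_prod, map_pow, map_div₀, map_sub,
    pact_swap_x_zero, pact_swap_x_one, pact_swap_x_add_two, pact_t]
  ring

theorem HL_cons_cons_succ (a : ℕ) (ν : Fin m → ℕ) :
    HL (m + 2) (Fin.cons a (Fin.cons (a + 1) ν))
      = t * HL (m + 2) (Fin.cons (a + 1) (Fin.cons a ν)) := by
  rw [HL_cons_cons, HL_cons_cons]
  refine sum_pact_eq_mul_of_add_pact s₀₁ pact_t ?_
  simp only [map_mul, map_pow, pact_swap_x_zero, pact_swap_x_one, pact_swap_hlFactor_zero_one,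
    pact_swap_hlRest]
  unfold hlFactor
  linear_combination hlRest m ν * add_swap_eq_mul a t (x_injective.ne zero_ne_one)

end Swap

theorem FF_swap_general (m : ℕ) (lam : Fin (m + 3) → ℕ) :
    FF m lam (lam 1) (lam 1 + 1) = t * FF m lam (lam 1 + 1) (lam 1) := by
  rw [FF, FF, mul_sum]
  refine sum_congr rfl fun μ _ => ?_
  rw [HL_cons_cons_succ, map_mul, zeta_t]
  ring

/-- **Proposition (shift identity for `F_{λ''}`).**
`F_{λ''}(λ_2, λ_2 + 1) = t ⬝ F_{λ''}(λ_2 + 1, λ_2)`. -/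
theorem FF_swap (m : ℕ) (lam : Fin (m + 3) → ℕ)
    (hlam : ∀ i j : Fin (m + 3), i ≤ j → lam j ≤ lam i) :
    FF m lam (lam 1) (lam 1 + 1) = t * FF m lam (lam 1 + 1) (lam 1) :=
  FF_swap_general m lam

end
end
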